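/- arXiv:1109.0306 — 2 statements merged into one kernel-verified Lean document; each statement's English description precedes it below -/
import Mathlib

section
/- Let n ≥ 1 and p > 1, and let w be a weight on ℂⁿ. If w ∈ A_{p,r} for some r > 0, then w ∈ A_{p,r'} for every r' > 0; that is, the classes A_{p,r} coincide for all r > 0. -/
open MeasureTheory ENNReal Metric

noncomputable section

/-- We identify `ℂⁿ` with `ℝ^{2n}` equipped with Lebesgue measure. -/
abbrev En (n : ℕ) := EuclideanSpace ℂ (Fin n)

instance (n : ℕ) : MeasurableSpace (En n) := borel _
instance (n : ℕ) : BorelSpace (En n) := ⟨rfl⟩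
instance (n : ℕ) : InnerProductSpace ℝ (En n) := InnerProductSpace.complexToReal

/-- The axis-parallel cube with center `z` and side length `r`. -/
def cube (n : ℕ) (r : ℝ) (z : En n) : Set (En n) :=
  {u | ∀ j, |(u j).re - (z j).re| ≤ r / 2 ∧ |(u j).im - (z j).im| ≤ r / 2}

/-- A weight on `ℂⁿ`: measurable, positive a.e. and locally integrable. -/
def IsWeight (n : ℕ) (w : En n → ℝ) : Prop :=
  Measurable w ∧ (∀ᵐ z : En n, 0 < w z) ∧ LocallyIntegrable w volume

/-- The restricted Muckenhoupt condition `A_{p,r}`. -/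
def MemApr (n : ℕ) (p r : ℝ) (w : En n → ℝ) : Prop :=
  ∃ C : ℝ, ∀ z : En n,
    ((volume (cube n r z))⁻¹ * ∫⁻ u in cube n r z, ENNReal.ofReal (w u)) *
      ((volume (cube n r z))⁻¹ *
        ∫⁻ u in cube n r z, ENNReal.ofReal (w u ^ (-(1 / (p - 1))))) ^ (p - 1)
      ≤ ENNReal.ofReal C

/-!
Write `W(Q) = ∫_Q w` and `S(Q) = ∫_Q w^{-1/(p-1)}`. All cubes of a given side have the same
volume, so `w ∈ A_{p,r}` says exactly that `W(Q) S(Q)^{p-1}` is bounded over the cubes of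
side `r`; such a bound passes to smaller cubes by monotonicity, so it suffices to double `r`.

Hölder's inequality gives `|E|^p ≤ W(E) S(E)^{p-1}`, hence
`W(Q) S(Q')^{p-1} |E|^p ≤ W(Q) S(Q)^{p-1} · W(Q') S(Q')^{p-1}` whenever `E ⊆ Q ∩ Q'`.
A cube of side `2r` is covered by the `4ⁿ` cubes `Q_ε` of side `r` at its corners, and each
`Q_ε` meets the concentric cube `Q₀` of side `r` in a cube of side `r/2`. Chaining the estimate
through `Q₀` bounds every mixed product `W(Q_ε) S(Q_δ)^{p-1}`, hence `W S^{p-1}` on the cube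
of side `2r`.
-/

lemma ENNReal.mul_mul_mul_rpow_sub_one {p : ℝ} (hp : 1 ≤ p) (a x y : ℝ≥0∞) :
    a * x * (a * y) ^ (p - 1) = a ^ p * (x * y ^ (p - 1)) := by
  have hp' : 0 ≤ p - 1 := by linarith
  rw [ENNReal.mul_rpow_of_nonneg _ _ hp', ← add_sub_cancel 1 p,
    ENNReal.rpow_add_of_nonneg _ _ zero_le_one hp', add_sub_cancel, ENNReal.rpow_one]
  ring

lemma ENNReal.exists_le_ofReal_iff_iSup_ne_top {ι : Type*} (f : ι → ℝ≥0∞) :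
    (∃ C : ℝ, ∀ i, f i ≤ ENNReal.ofReal C) ↔ ⨆ i, f i ≠ ∞ :=
  ⟨fun ⟨_, hC⟩ => ne_top_of_le_ne_top ENNReal.ofReal_ne_top (iSup_le hC), fun h =>
    ⟨(⨆ i, f i).toReal, fun i => by rw [ENNReal.ofReal_toReal h]; exact le_iSup f i⟩⟩

section ApProduct

variable {α : Type*} [MeasurableSpace α]

def apProduct (ν σ : Measure α) (p : ℝ) (s : Set α) : ℝ≥0∞ :=
  ν s * σ s ^ (p - 1)

variable {ν σ : Measure α} {p : ℝ}

lemma apProduct_mono (hp : 1 ≤ p) {s t : Set α} (h : s ⊆ t) :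
    apProduct ν σ p s ≤ apProduct ν σ p t := by
  unfold apProduct
  gcongr

lemma mul_rpow_mul_apProduct_le (hp : 1 ≤ p) {E Q Q' : Set α} (hQ : E ⊆ Q) (hQ' : E ⊆ Q') :
    ν Q * σ Q' ^ (p - 1) * apProduct ν σ p E ≤
      apProduct ν σ p Q * apProduct ν σ p Q' := by
  calc ν Q * σ Q' ^ (p - 1) * apProduct ν σ p E
      = ν Q * σ E ^ (p - 1) * (ν E * σ Q' ^ (p - 1)) := by unfold apProduct; ring
    _ ≤ ν Q * σ Q ^ (p - 1) * (ν Q' * σ Q' ^ (p - 1)) := by gcongr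

lemma mul_rpow_mul_le_of_subset_inter (hp : 1 ≤ p) {E E' Q Q' Q₀ : Set α}
    (hE : E ⊆ Q ∩ Q₀) (hE' : E' ⊆ Q' ∩ Q₀) :
    ν Q * σ Q' ^ (p - 1) *
        (apProduct ν σ p Q₀ * apProduct ν σ p E * apProduct ν σ p E') ≤
      apProduct ν σ p Q * apProduct ν σ p Q₀ *
        (apProduct ν σ p Q₀ * apProduct ν σ p Q') := by
  calc ν Q * σ Q' ^ (p - 1) *
        (apProduct ν σ p Q₀ * apProduct ν σ p E * apProduct ν σ p E')
      = ν Q * σ Q₀ ^ (p - 1) * apProduct ν σ p E *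
          (ν Q₀ * σ Q' ^ (p - 1) * apProduct ν σ p E') := by
        unfold apProduct; ring
    _ ≤ _ := mul_le_mul'
        (mul_rpow_mul_apProduct_le hp (hE.trans Set.inter_subset_left)
          (hE.trans Set.inter_subset_right))
        (mul_rpow_mul_apProduct_le hp (hE'.trans Set.inter_subset_right)
          (hE'.trans Set.inter_subset_left))

lemma exists_measure_le_card_mul_of_subset_iUnion {ι : Type*} [Fintype ι] [Nonempty ι]
    (μ : Measure α) {B : Set α} {Q : ι → Set α} (hB : B ⊆ ⋃ i, Q i) :
    ∃ i, μ B ≤ Fintype.card ι * μ (Q i) := by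
  obtain ⟨i, hi⟩ := Finite.exists_max (fun j => μ (Q j))
  refine ⟨i, ?_⟩
  calc μ B ≤ ∑ j, μ (Q j) := (measure_mono hB).trans (measure_iUnion_fintype_le μ Q)
    _ ≤ Finset.univ.card • μ (Q i) := Finset.sum_le_card_nsmul _ _ _ fun j _ => hi j
    _ = Fintype.card ι * μ (Q i) := by rw [nsmul_eq_mul, Finset.card_univ]

lemma apProduct_mul_le_of_subset_iUnion {ι : Type*} [Fintype ι] [Nonempty ι] (hp : 1 ≤ p)
    {B Q₀ : Set α} {Q E : ι → Set α} (hB : B ⊆ ⋃ i, Q i) (hE : ∀ i, E i ⊆ Q i ∩ Q₀)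
    {c₀ c M : ℝ≥0∞} (hc₀ : c₀ ≤ apProduct ν σ p Q₀)
    (hc : ∀ i, c ≤ apProduct ν σ p (E i))
    (hM₀ : apProduct ν σ p Q₀ ≤ M) (hM : ∀ i, apProduct ν σ p (Q i) ≤ M) :
    apProduct ν σ p B * (c₀ * c * c) ≤ (Fintype.card ι : ℝ≥0∞) ^ p * M ^ 4 := by
  set N : ℝ≥0∞ := (Fintype.card ι : ℝ≥0∞)
  obtain ⟨a, ha⟩ := exists_measure_le_card_mul_of_subset_iUnion ν hB
  obtain ⟨b, hb⟩ := exists_measure_le_card_mul_of_subset_iUnion σ hB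
  calc apProduct ν σ p B * (c₀ * c * c)
      ≤ N * ν (Q a) * (N * σ (Q b)) ^ (p - 1) *
          (apProduct ν σ p Q₀ * apProduct ν σ p (E a) * apProduct ν σ p (E b)) :=
        mul_le_mul' (mul_le_mul' ha (ENNReal.rpow_le_rpow hb (by linarith)))
          (mul_le_mul' (mul_le_mul' hc₀ (hc a)) (hc b))
    _ = N ^ p * (ν (Q a) * σ (Q b) ^ (p - 1) *
          (apProduct ν σ p Q₀ * apProduct ν σ p (E a) * apProduct ν σ p (E b))) := by
        rw [ENNReal.mul_mul_mul_rpow_sub_one hp]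
        ring
    _ ≤ N ^ p * (apProduct ν σ p (Q a) * apProduct ν σ p Q₀ *
          (apProduct ν σ p Q₀ * apProduct ν σ p (Q b))) :=
        mul_le_mul_right (mul_rpow_mul_le_of_subset_inter hp (hE a) (hE b)) _
    _ ≤ N ^ p * (M * M * (M * M)) :=
        mul_le_mul_right (mul_le_mul' (mul_le_mul' (hM a) hM₀) (mul_le_mul' hM₀ (hM b))) _
    _ = N ^ p * M ^ 4 := by ring

def weightApProduct (μ : Measure α) (p : ℝ) (w : α → ℝ) : Set α → ℝ≥0∞ :=
  apProduct (μ.withDensity fun x => ENNReal.ofReal (w x))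
    (μ.withDensity fun x => ENNReal.ofReal (w x ^ (-(1 / (p - 1))))) p

lemma weightApProduct_eq {μ : Measure α} [SFinite μ] (w : α → ℝ) (s : Set α) :
    weightApProduct μ p w s = (∫⁻ x in s, ENNReal.ofReal (w x) ∂μ) *
      (∫⁻ x in s, ENNReal.ofReal (w x ^ (-(1 / (p - 1)))) ∂μ) ^ (p - 1) := by
  rw [weightApProduct, apProduct, withDensity_apply', withDensity_apply']

lemma measure_rpow_le_weightApProduct {μ : Measure α} [SFinite μ] {w : α → ℝ}
    (hw : AEMeasurable w μ) (hpos : ∀ᵐ x ∂μ, 0 < w x) (hp : 1 < p) (s : Set α) :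
    μ s ^ p ≤ weightApProduct μ p w s := by
  have hp₀ : 0 < p := by linarith
  have hp₁ : 0 < p - 1 := by linarith
  have hone : ∀ᵐ x ∂μ.restrict s, 1 = ENNReal.ofReal (w x) ^ (1 / p) *
      ENNReal.ofReal (w x ^ (-(1 / (p - 1)))) ^ ((p - 1) / p) := by
    filter_upwards [ae_restrict_of_ae hpos] with x hx
    rw [← ENNReal.ofReal_rpow_of_pos hx, ← ENNReal.rpow_mul,
      ← ENNReal.rpow_add _ _ (ENNReal.ofReal_pos.2 hx).ne' ENNReal.ofReal_ne_top]
    field_simp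
    simp
  have holder := ENNReal.lintegral_mul_norm_pow_le (μ := μ.restrict s)
    hw.restrict.ennreal_ofReal (hw.restrict.pow_const (-(1 / (p - 1)) : ℝ)).ennreal_ofReal
    (one_div_nonneg.2 hp₀.le) (div_nonneg hp₁.le hp₀.le) (by field_simp; ring)
  rw [← lintegral_congr_ae hone, lintegral_one, Measure.restrict_apply_univ] at holder
  calc μ s ^ p ≤ (_ ^ (1 / p) * _ ^ ((p - 1) / p)) ^ p := ENNReal.rpow_le_rpow holder hp₀.le
    _ = _ := by
      rw [weightApProduct_eq, ENNReal.mul_rpow_of_nonneg _ _ hp₀.le,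
        ← ENNReal.rpow_mul, ← ENNReal.rpow_mul, one_div_mul_cancel hp₀.ne',
        div_mul_cancel₀ _ hp₀.ne', ENNReal.rpow_one]

end ApProduct

section Cubes

variable {n : ℕ}

lemma cube_mono {r s : ℝ} (h : r ≤ s) (z : En n) : cube n r z ⊆ cube n s z :=
  fun _ hu j => ⟨(hu j).1.trans (by linarith), (hu j).2.trans (by linarith)⟩

lemma volume_cube (r : ℝ) (z : En n) : volume (cube n r z) = volume (cube n r 0) := by
  have : cube n r z = (· + -z) ⁻¹' cube n r 0 := by
    ext u
    simp [cube, sub_eq_add_neg]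
  rw [this, measure_preimage_add_right]

lemma ball_subset_cube (r : ℝ) (z : En n) : ball z (r / 2) ⊆ cube n r z := by
  intro u hu j
  have hj : ‖u j - z j‖ < r / 2 :=
    (PiLp.norm_apply_le (u - z) j).trans_lt (by rwa [mem_ball, dist_eq_norm] at hu)
  have hre := Complex.abs_re_le_norm (u j - z j)
  have him := Complex.abs_im_le_norm (u j - z j)
  simp only [Complex.sub_re, Complex.sub_im] at hre him
  exact ⟨by linarith, by linarith⟩

lemma cube_subset_closedBall (r : ℝ) (z : En n) : cube n r z ⊆ closedBall z √(n * r ^ 2) := by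
  intro u hu
  rw [mem_closedBall, dist_eq_norm, Real.le_sqrt (norm_nonneg _) (by positivity),
    EuclideanSpace.norm_sq_eq]
  calc ∑ j, ‖(u - z) j‖ ^ 2 ≤ ∑ _j : Fin n, r ^ 2 := by
        refine Finset.sum_le_sum fun j _ => ?_
        have h := Complex.norm_le_abs_re_add_abs_im (u j - z j)
        simp only [Complex.sub_re, Complex.sub_im] at h
        rw [PiLp.sub_apply]
        exact pow_le_pow_left₀ (norm_nonneg _) (by linarith [hu j]) 2
    _ = n * r ^ 2 := by simp

lemma volume_cube_pos {r : ℝ} (hr : 0 < r) (z : En n) : 0 < volume (cube n r z) :=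
  (measure_ball_pos volume z (half_pos hr)).trans_le (measure_mono (ball_subset_cube r z))

lemma volume_cube_ne_top (r : ℝ) (z : En n) : volume (cube n r z) ≠ ∞ :=
  ne_top_of_le_ne_top measure_closedBall_lt_top.ne (measure_mono (cube_subset_closedBall r z))

def signedHalf (b : Bool) (r : ℝ) : ℝ := if b then r / 2 else -(r / 2)

lemma abs_sub_signedHalf_le {x r : ℝ} (h : |x| ≤ r) :
    |x - signedHalf (decide (0 ≤ x)) r| ≤ r / 2 := by
  by_cases hx : 0 ≤ x <;>
    simp only [signedHalf, hx, decide_true, decide_false, Bool.false_eq_true, ↓reduceIte] <;>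
    rw [abs_le] at h ⊢ <;> constructor <;> linarith

lemma abs_le_of_abs_sub_signedHalf_le {x r : ℝ} (b : Bool)
    (h : |x - signedHalf b (r / 2)| ≤ r / 2 / 2) :
    |x| ≤ r / 2 ∧ |x - signedHalf b r| ≤ r / 2 := by
  cases b <;> simp only [signedHalf, Bool.false_eq_true, ↓reduceIte, abs_le] at h ⊢ <;>
    exact ⟨⟨by linarith, by linarith⟩, by linarith, by linarith⟩

def cornerOffset (r : ℝ) (ε : Fin n → Bool × Bool) : En n :=
  WithLp.toLp 2 fun j => ⟨signedHalf (ε j).1 r, signedHalf (ε j).2 r⟩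

lemma mem_cube_add_cornerOffset_iff {r s : ℝ} {u z : En n} {ε : Fin n → Bool × Bool} :
    u ∈ cube n s (z + cornerOffset r ε) ↔ ∀ j,
      |(u j).re - (z j).re - signedHalf (ε j).1 r| ≤ s / 2 ∧
        |(u j).im - (z j).im - signedHalf (ε j).2 r| ≤ s / 2 := by
  simp [cube, cornerOffset, sub_sub]

lemma cube_two_mul_subset_iUnion (r : ℝ) (z : En n) :
    cube n (2 * r) z ⊆ ⋃ ε : Fin n → Bool × Bool, cube n r (z + cornerOffset r ε) := by
  intro u hu
  refine Set.mem_iUnion.2 ⟨fun j => (decide (0 ≤ (u j).re - (z j).re),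
    decide (0 ≤ (u j).im - (z j).im)), mem_cube_add_cornerOffset_iff.2 fun j => ?_⟩
  have hu : _ ∧ _ := hu j
  rw [mul_div_cancel_left₀ r two_ne_zero] at hu
  exact ⟨abs_sub_signedHalf_le hu.1, abs_sub_signedHalf_le hu.2⟩

lemma cube_half_subset_inter (r : ℝ) (z : En n) (ε : Fin n → Bool × Bool) :
    cube n (r / 2) (z + cornerOffset (r / 2) ε) ⊆
      cube n r (z + cornerOffset r ε) ∩ cube n r z := by
  intro u hu
  rw [mem_cube_add_cornerOffset_iff] at hu
  have hre := fun j => abs_le_of_abs_sub_signedHalf_le _ (hu j).1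
  have him := fun j => abs_le_of_abs_sub_signedHalf_le _ (hu j).2
  exact ⟨mem_cube_add_cornerOffset_iff.2 fun j => ⟨(hre j).2, (him j).2⟩,
    fun j => ⟨(hre j).1, (him j).1⟩⟩

end Cubes

section CubeAp

variable {n : ℕ} {p r : ℝ} {w : En n → ℝ}

def cubeApSup (n : ℕ) (p r : ℝ) (w : En n → ℝ) : ℝ≥0∞ :=
  ⨆ z, weightApProduct volume p w (cube n r z)

lemma memApr_iff_cubeApSup_ne_top (hp : 1 ≤ p) (hr : 0 < r) :
    MemApr n p r w ↔ cubeApSup n p r w ≠ ∞ := by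
  set V := volume (cube n r (0 : En n))
  have hV₀ : V⁻¹ ^ p ≠ 0 := (ENNReal.rpow_pos (ENNReal.inv_pos.2 (volume_cube_ne_top r 0))
    (ENNReal.inv_ne_top.2 (volume_cube_pos hr 0).ne')).ne'
  have hV : V⁻¹ ^ p ≠ ∞ := ENNReal.rpow_ne_top_of_nonneg (by linarith)
    (ENNReal.inv_ne_top.2 (volume_cube_pos hr 0).ne')
  simp_rw [MemApr, volume_cube r, ENNReal.mul_mul_mul_rpow_sub_one hp, ← weightApProduct_eq,
    ENNReal.exists_le_ofReal_iff_iSup_ne_top, ← ENNReal.mul_iSup]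
  rw [cubeApSup, ne_eq, ENNReal.mul_eq_top]
  tauto

lemma cubeApSup_mono (hp : 1 ≤ p) {s : ℝ} (h : r ≤ s) :
    cubeApSup n p r w ≤ cubeApSup n p s w :=
  iSup_mono fun z => apProduct_mono hp (cube_mono h z)

lemma cubeApSup_two_mul_ne_top (hw : Measurable w) (hpos : ∀ᵐ u, 0 < w u) (hp : 1 < p)
    (hr : 0 < r) (h : cubeApSup n p r w ≠ ∞) : cubeApSup n p (2 * r) w ≠ ∞ := by
  have hvol (s : ℝ) (z : En n) :
      volume (cube n s 0) ^ p ≤ weightApProduct volume p w (cube n s z) :=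
    volume_cube s z ▸ measure_rpow_le_weightApProduct hw.aemeasurable hpos hp _
  have hvol_ne_zero {s : ℝ} (hs : 0 < s) : volume (cube n s (0 : En n)) ^ p ≠ 0 :=
    (ENNReal.rpow_pos (volume_cube_pos hs 0) (volume_cube_ne_top s 0)).ne'
  have hc : volume (cube n r 0) ^ p * volume (cube n (r / 2) 0) ^ p *
      volume (cube n (r / 2) 0) ^ p ≠ 0 :=
    mul_ne_zero (mul_ne_zero (hvol_ne_zero hr) (hvol_ne_zero (half_pos hr)))
      (hvol_ne_zero (half_pos hr))
  set B := (Fintype.card (Fin n → Bool × Bool) : ℝ≥0∞) ^ p * cubeApSup n p r w ^ 4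
  have hB : B ≠ ∞ := ENNReal.mul_ne_top
    (ENNReal.rpow_ne_top_of_nonneg (by linarith) (ENNReal.natCast_ne_top _))
    (ENNReal.pow_ne_top h)
  refine ne_top_of_le_ne_top (ENNReal.div_ne_top hB hc) (iSup_le fun z => ?_)
  rw [ENNReal.le_div_iff_mul_le (Or.inl hc) (Or.inr hB)]
  have hsup := le_iSup fun z => weightApProduct volume p w (cube n r z)
  exact apProduct_mul_le_of_subset_iUnion hp.le (cube_two_mul_subset_iUnion r z)
    (cube_half_subset_inter r z) (hvol r z) (fun _ => hvol _ _) (hsup z) (fun _ => hsup _)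

end CubeAp

theorem Apr_of_Apr_general (n : ℕ) (p : ℝ) (hp : 1 < p) (w : En n → ℝ)
    (hw : IsWeight n w) (h : ∃ r : ℝ, 0 < r ∧ MemApr n p r w) :
    ∀ r' : ℝ, 0 < r' → MemApr n p r' w := by
  obtain ⟨r, hr, hmem⟩ := h
  intro r' hr'
  rw [memApr_iff_cubeApSup_ne_top hp.le hr] at hmem
  rw [memApr_iff_cubeApSup_ne_top hp.le hr']
  have hdyadic : ∀ k : ℕ, cubeApSup n p (2 ^ k * r) w ≠ ∞ := by
    intro k
    induction k with
    | zero => simpa using hmem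
    | succ k ih =>
      rw [pow_succ, mul_comm _ (2 : ℝ), mul_assoc]
      exact cubeApSup_two_mul_ne_top hw.1 hw.2.1 hp (by positivity) ih
  obtain ⟨k, hk⟩ := pow_unbounded_of_one_lt (r' / r) one_lt_two
  exact ne_top_of_le_ne_top (hdyadic k) (cubeApSup_mono hp.le ((div_lt_iff₀ hr).1 hk).le)

/-- the classes `A_{p,r}` coincide for all `r > 0`. -/
theorem Apr_of_Apr (n : ℕ) (hn : 1 ≤ n) (p : ℝ) (hp : 1 < p) (w : En n → ℝ)
    (hw : IsWeight n w) (h : ∃ r : ℝ, 0 < r ∧ MemApr n p r w) :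
    ∀ r' : ℝ, 0 < r' → MemApr n p r' w :=
  Apr_of_Apr_general n p hp w hw h

end
end

section
/- Let n ≥ 1, p > 1, q = p/(p-1), and α > 0. Let f, g : ℂⁿ → ℂ be entire functions with ∫_{ℂⁿ} |f(z)|^p e^{-(pα/2)|z|²} dv(z) < ∞ and ∫_{ℂⁿ} |g(z)|^q e^{-(qα/2)|z|²} dv(z) < ∞, and suppose that sup_{z ∈ ℂⁿ} ( (|f|^p)~^{(αp/2)}(z) )^{1/p} · ( (|g|^q)~^{(αq/2)}(z) )^{1/q} < ∞. Then the product f·g is identically constant on ℂⁿ; and if moreover f and g never vanish on ℂⁿ, then there exist a, c ∈ ℂ and b ∈ ℂⁿ such that f(z) = exp(a + Σ_j b_j z_j) and g(z) = c · exp(-(a + Σ_j b_j z_j)) for all z ∈ ℂⁿ. -/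
open MeasureTheory ENNReal Metric

noncomputable section

/-- The heat (Berezin) transform `h~^{(β)}(z) = (β/π)ⁿ ∫ e^{-β|z-u|²} h(u) dv(u)`. -/
def heatT (n : ℕ) (β : ℝ) (h : En n → ℝ≥0∞) (z : En n) : ℝ≥0∞ :=
  ENNReal.ofReal ((β / Real.pi) ^ n) *
    ∫⁻ u : En n, ENNReal.ofReal (Real.exp (-β * ‖z - u‖ ^ 2)) * h u

/-!
By the mean value property on the complex lines through `w`, averaged over the unit ball and
combined with Hölder's inequality, `|f w|^p` is dominated by the mean of `|f|^p` over the unit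
ball around `w`; on that ball the Gaussian kernel of the heat transform centred at `z` is bounded
below as soon as `|w - z| ≤ r`. Hence `|f w| ≲_r ((|f|^p)~(z))^{1/p}`, and the hypothesis turns
into `|f (z + v)| |g z| ≤ K_v` for every `v`. For `v = 0`, Liouville makes `f g` a constant `c`.
If `c ≠ 0`, then `|f (z + v)| ≤ (K_v / |c|) |f z|`, so Liouville applied to `f (z + v) / f z`
makes `f / f 0` a differentiable character of `(ℂⁿ, +)`, which is the exponential of a linear form.
-/

open Real Set

theorem rpow_lintegral_le_mul_lintegral_rpow {α : Type*} [MeasurableSpace α] {μ : Measure α}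
    {p : ℝ} (hp : 1 ≤ p) {F : α → ℝ≥0∞} (hF : AEMeasurable F μ) :
    (∫⁻ a, F a ∂μ) ^ p ≤ μ univ ^ (p - 1) * ∫⁻ a, F a ^ p ∂μ := by
  have hp0 : 0 < p := one_pos.trans_le hp
  have holder := eLpNorm'_le_eLpNorm'_mul_rpow_measure_univ one_pos hp hF.aestronglyMeasurable
  simp only [eLpNorm'_eq_lintegral_enorm, enorm_eq_self, ENNReal.rpow_one, div_one] at holder
  calc (∫⁻ a, F a ∂μ) ^ p
      ≤ ((∫⁻ a, F a ^ p ∂μ) ^ (1 / p) * μ univ ^ (1 - 1 / p)) ^ p := by gcongr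
    _ = μ univ ^ (p - 1) * ∫⁻ a, F a ^ p ∂μ := by
      rw [ENNReal.mul_rpow_of_nonneg _ _ hp0.le, ← ENNReal.rpow_mul, ← ENNReal.rpow_mul,
        one_div_mul_cancel hp0.ne', ENNReal.rpow_one, mul_comm]
      congr 2
      field_simp

theorem two_pi_mul_enorm_le_lintegral_circleMap {E F : Type*} [NormedAddCommGroup E]
    [NormedSpace ℂ E] [NormedAddCommGroup F] [NormedSpace ℂ F] [CompleteSpace F] {f : E → F}
    (hf : Differentiable ℂ f) (w v : E) :
    ENNReal.ofReal (2 * π) * ‖f w‖ₑ ≤ ∫⁻ θ in Ioc 0 (2 * π), ‖f (w + circleMap 0 1 θ • v)‖ₑ := by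
  let g : ℂ → F := fun ζ => f (w + ζ • v)
  have hg : Differentiable ℂ g := hf.comp ((differentiable_id.smul_const v).const_add w)
  have mean : (2 * π) • f w = ∫ θ in Ioc 0 (2 * π), g (circleMap 0 1 θ) := by
    have h := hg.diffContOnCl.circleAverage (c := 0) (R := 1)
    rw [circleAverage_def, intervalIntegral.integral_of_le two_pi_pos.le] at h
    simp only [g, zero_smul, add_zero] at h
    rw [← h, smul_inv_smul₀ two_pi_pos.ne']
  calc ENNReal.ofReal (2 * π) * ‖f w‖ₑ = ‖(2 * π) • f w‖ₑ := by
        rw [enorm_smul, Real.enorm_of_nonneg two_pi_pos.le]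
    _ ≤ _ := mean ▸ enorm_integral_le_lintegral_enorm _

theorem norm_add_le_mul_norm_of_mul_eq_const {E : Type*} [Add E] {f g : E → ℂ} {c : ℂ}
    (hc : ∀ z, f z * g z = c) (hc0 : c ≠ 0) {v : E} {K : ℝ}
    (hK : ∀ z, ‖f (z + v)‖ * ‖g z‖ ≤ K) (z : E) :
    ‖f (z + v)‖ ≤ K / ‖c‖ * ‖f z‖ := by
  rw [div_mul_eq_mul_div, le_div_iff₀ (norm_pos_iff.mpr hc0), ← hc z, norm_mul, ← mul_assoc,
    mul_right_comm]
  exact mul_le_mul_of_nonneg_right (hK z) (norm_nonneg _)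

section Entire

variable {E : Type*} [NormedAddCommGroup E] [NormedSpace ℂ E]

theorem map_add_mul_eq_of_norm_add_le {f : E → ℂ} (hf : Differentiable ℂ f)
    (hf0 : ∀ z, f z ≠ 0) {v : E} {K : ℝ} (hK : ∀ z, ‖f (z + v)‖ ≤ K * ‖f z‖) (z : E) :
    f (z + v) * f 0 = f v * f z := by
  have hratio : Differentiable ℂ fun z => f (z + v) / f z := by
    simp only [div_eq_mul_inv]
    exact (hf.comp (differentiable_id.add_const v)).mul (hf.inv hf0)
  have hbdd : Bornology.IsBounded (Set.range fun z => f (z + v) / f z) := by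
    refine isBounded_iff_forall_norm_le.mpr ⟨K, Set.forall_mem_range.mpr fun z => ?_⟩
    rw [norm_div, div_le_iff₀ (norm_pos_iff.mpr (hf0 z))]
    exact hK z
  have h := hratio.apply_eq_apply_of_bounded hbdd z 0
  rw [zero_add, div_eq_div_iff (hf0 z) (hf0 0)] at h
  linear_combination h

theorem eq_exp_of_map_add_eq_mul {ψ : E → ℂ} (hψ : Differentiable ℂ ψ) (h0 : ψ 0 = 1)
    (hadd : ∀ z v, ψ (z + v) = ψ z * ψ v) (z : E) : ψ z = Complex.exp (fderiv ℂ ψ 0 z) := by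
  set L := fderiv ℂ ψ 0
  have hderiv : ∀ x, HasFDerivAt ψ (ψ x • L) x := by
    intro x
    have hL : HasFDerivAt ψ L (x - x) := by rw [sub_self]; exact (hψ 0).hasFDerivAt
    have hsub : HasFDerivAt (fun w : E => w - x) (ContinuousLinearMap.id ℂ E) x :=
      (hasFDerivAt_id x).sub_const x
    have h := (hL.comp (f := fun w => w - x) x hsub).const_mul (ψ x)
    rw [ContinuousLinearMap.comp_id] at h
    refine h.congr_of_eventuallyEq (Filter.Eventually.of_forall fun w => ?_)
    show ψ w = ψ x * ψ (w - x)
    rw [← hadd, add_sub_cancel]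
  have hφ (x : E) := (hderiv x).mul (L.hasFDerivAt.fun_neg.cexp)
  have h : ψ z * Complex.exp (-L z) = ψ 0 * Complex.exp (-L 0) := by
    refine is_const_of_fderiv_eq_zero (𝕜 := ℂ) (fun x => (hφ x).differentiableAt)
      (fun x => (hφ x).fderiv.trans ?_) z 0
    ext; simp; ring
  simp only [h0, map_zero, neg_zero, Complex.exp_zero, mul_one] at h
  calc ψ z = ψ z * Complex.exp (-L z) * Complex.exp (L z) := by
        rw [mul_assoc, ← Complex.exp_add, neg_add_cancel, Complex.exp_zero, mul_one]
    _ = Complex.exp (L z) := by rw [h, one_mul]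

theorem exists_eq_exp_add_of_norm_add_le {f : E → ℂ} (hf : Differentiable ℂ f)
    (hf0 : ∀ z, f z ≠ 0) (hK : ∀ v, ∃ K : ℝ, ∀ z, ‖f (z + v)‖ ≤ K * ‖f z‖) :
    ∃ (a : ℂ) (L : E →L[ℂ] ℂ), ∀ z, f z = Complex.exp (a + L z) := by
  set ψ := fun z => f z / f 0
  have hψadd : ∀ z v, ψ (z + v) = ψ z * ψ v := fun z v => by
    obtain ⟨K, hK⟩ := hK v
    have h := map_add_mul_eq_of_norm_add_le hf hf0 hK z
    simp only [ψ]
    rw [div_mul_div_comm, div_eq_div_iff (hf0 0) (mul_ne_zero (hf0 0) (hf0 0))]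
    linear_combination f 0 * h
  refine ⟨Complex.log (f 0), fderiv ℂ ψ 0, fun z => ?_⟩
  rw [Complex.exp_add, Complex.exp_log (hf0 0), ← eq_exp_of_map_add_eq_mul (ψ := ψ)
    (by fun_prop) (div_self (hf0 0)) hψadd z]
  exact (mul_div_cancel₀ _ (hf0 0)).symm

end Entire

theorem EuclideanSpace.continuousLinearMap_apply_eq_sum {𝕜 ι : Type*} [RCLike 𝕜] [Fintype ι]
    [DecidableEq ι] (L : EuclideanSpace 𝕜 ι →L[𝕜] 𝕜) (z : EuclideanSpace 𝕜 ι) :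
    L z = ∑ j, L (EuclideanSpace.single j 1) * z j := by
  conv_lhs => rw [← (EuclideanSpace.basisFun ι 𝕜).sum_repr z]
  simp [map_sum, mul_comm]

section Heat

variable {n : ℕ}

theorem setLIntegral_ball_zero_smul {e : ℂ} (he : ‖e‖ = 1) (F : En n → ℝ≥0∞) (r : ℝ) :
    ∫⁻ v in ball 0 r, F (e • v) = ∫⁻ v in ball 0 r, F v := by
  have he0 : e ≠ 0 := norm_ne_zero_iff.mp (he ▸ one_ne_zero)
  let T : En n ≃ₗᵢ[ℝ] En n :=
    ⟨(LinearEquiv.smulOfNeZero ℂ (En n) e he0).restrictScalars ℝ,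
      fun v => by simp [he, norm_smul]⟩
  have hpre : T ⁻¹' ball 0 r = ball 0 r := by
    ext v
    simp [T, norm_smul, he]
  have h := T.measurePreserving.setLIntegral_comp_preimage_emb
    T.toHomeomorph.measurableEmbedding F (ball 0 r)
  rwa [hpre] at h

theorem setLIntegral_ball_zero_add (F : En n → ℝ≥0∞) (w : En n) (r : ℝ) :
    ∫⁻ v in ball 0 r, F (w + v) = ∫⁻ u in ball w r, F u := by
  have hpre : (w + ·) ⁻¹' ball w r = ball (0 : En n) r := by
    ext v
    simp
  simpa [hpre] using (measurePreserving_add_left volume w).setLIntegral_comp_preimage_emb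
    (Homeomorph.addLeft w).measurableEmbedding F (ball w r)

theorem volume_ball_mul_enorm_le_setLIntegral {f : En n → ℂ} (hf : Differentiable ℂ f)
    (w : En n) (r : ℝ) :
    volume (ball (0 : En n) r) * ‖f w‖ₑ ≤ ∫⁻ u in ball w r, ‖f u‖ₑ := by
  have hmeas : Measurable (Function.uncurry fun (v : En n) (θ : ℝ) =>
      ‖f (w + circleMap 0 1 θ • v)‖ₑ) := by
    refine (hf.continuous.comp ?_).enorm.measurable
    fun_prop
  have h2π : ENNReal.ofReal (2 * π) ≠ 0 := by simp [pi_pos]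
  refine (ENNReal.mul_le_mul_iff_right h2π ENNReal.ofReal_ne_top).mp ?_
  calc ENNReal.ofReal (2 * π) * (volume (ball (0 : En n) r) * ‖f w‖ₑ)
      = ∫⁻ _ in ball (0 : En n) r, ENNReal.ofReal (2 * π) * ‖f w‖ₑ := by
        rw [setLIntegral_const]; ring
    _ ≤ ∫⁻ v in ball (0 : En n) r, ∫⁻ θ in Ioc 0 (2 * π), ‖f (w + circleMap 0 1 θ • v)‖ₑ :=
        lintegral_mono fun v => two_pi_mul_enorm_le_lintegral_circleMap hf w v
    _ = ∫⁻ θ in Ioc 0 (2 * π), ∫⁻ v in ball (0 : En n) r, ‖f (w + circleMap 0 1 θ • v)‖ₑ :=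
        lintegral_lintegral_swap hmeas.aemeasurable
    _ = ∫⁻ _ in Ioc 0 (2 * π), ∫⁻ u in ball w r, ‖f u‖ₑ := by
        refine lintegral_congr fun θ => ?_
        rw [setLIntegral_ball_zero_smul (norm_circleMap_zero 1 θ ▸ by simp)
          (fun v => ‖f (w + v)‖ₑ), setLIntegral_ball_zero_add (fun u => ‖f u‖ₑ)]
    _ = ENNReal.ofReal (2 * π) * ∫⁻ u in ball w r, ‖f u‖ₑ := by
        rw [setLIntegral_const, Real.volume_Ioc, sub_zero, mul_comm]

theorem volume_ball_mul_enorm_rpow_le_setLIntegral {f : En n → ℂ}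
    (hf : Differentiable ℂ f) {p : ℝ} (hp : 1 ≤ p) (w : En n) {r : ℝ} (hr : 0 < r) :
    volume (ball (0 : En n) r) * ‖f w‖ₑ ^ p ≤ ∫⁻ u in ball w r, ‖f u‖ₑ ^ p := by
  set V := volume (ball (0 : En n) r)
  have hV0 : V ≠ 0 := (measure_ball_pos volume _ hr).ne'
  have hVt : V ≠ ⊤ := measure_ball_lt_top.ne
  have hVw : volume.restrict (ball w r) univ = V := by
    rw [Measure.restrict_apply_univ, Measure.addHaar_ball_center]
  have jensen := rpow_lintegral_le_mul_lintegral_rpow hp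
    (μ := volume.restrict (ball w r)) hf.continuous.enorm.aemeasurable
  rw [hVw] at jensen
  have hVp : V ^ (p - 1) ≠ 0 := (ENNReal.rpow_pos (pos_iff_ne_zero.mpr hV0) hVt).ne'
  refine (ENNReal.mul_le_mul_iff_right hVp (ENNReal.rpow_ne_top_of_nonneg (by linarith) hVt)).mp ?_
  calc V ^ (p - 1) * (V * ‖f w‖ₑ ^ p) = (V * ‖f w‖ₑ) ^ p := by
        rw [ENNReal.mul_rpow_of_nonneg _ _ (by linarith), ← mul_assoc]
        congr 1
        conv_rhs => rw [← sub_add_cancel p 1, ENNReal.rpow_add _ _ hV0 hVt, ENNReal.rpow_one]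
    _ ≤ (∫⁻ u in ball w r, ‖f u‖ₑ) ^ p := by
        gcongr; exact volume_ball_mul_enorm_le_setLIntegral hf w r
    _ ≤ V ^ (p - 1) * ∫⁻ u in ball w r, ‖f u‖ₑ ^ p := jensen

theorem ofReal_mul_setLIntegral_ball_le_heatT {β r : ℝ} (hβ : 0 ≤ β) (h : En n → ℝ≥0∞)
    {z w : En n} (hzw : ‖w - z‖ ≤ r) :
    ENNReal.ofReal ((β / π) ^ n * exp (-β * (r + 1) ^ 2)) * ∫⁻ u in ball w 1, h u
      ≤ heatT n β h z := by
  rw [heatT, ENNReal.ofReal_mul (by positivity), mul_assoc,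
    ← lintegral_const_mul' _ _ ENNReal.ofReal_ne_top]
  refine mul_le_mul_right ((setLIntegral_mono' measurableSet_ball fun u hu => ?_).trans
    (setLIntegral_le_lintegral (ball w 1) _)) _
  have hzu : ‖z - u‖ ≤ r + 1 := calc
    ‖z - u‖ ≤ ‖z - w‖ + ‖w - u‖ := norm_sub_le_norm_sub_add_norm_sub z w u
    _ ≤ r + 1 := add_le_add (norm_sub_rev z w ▸ hzw) (mem_ball_iff_norm'.mp hu).le
  refine mul_le_mul_left (ENNReal.ofReal_le_ofReal (exp_le_exp.mpr ?_)) _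
  rw [neg_mul, neg_mul, neg_le_neg_iff]
  exact mul_le_mul_of_nonneg_left (pow_le_pow_left₀ (norm_nonneg _) hzu 2) hβ

theorem exists_enorm_le_mul_heatT_rpow {β p : ℝ} (hβ : 0 < β) (hp : 1 ≤ p)
    {f : En n → ℂ} (hf : Differentiable ℂ f) (r : ℝ) :
    ∃ C : ℝ≥0∞, C ≠ ⊤ ∧ ∀ z w : En n, ‖w - z‖ ≤ r →
      ‖f w‖ₑ ≤ C * heatT n β (fun u => ENNReal.ofReal (‖f u‖ ^ p)) z ^ (1 / p) := by
  have hp0 : 0 < p := one_pos.trans_le hp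
  set c := ENNReal.ofReal ((β / π) ^ n * exp (-β * (r + 1) ^ 2)) * volume (ball (0 : En n) 1)
  have hc : c ≠ 0 := mul_ne_zero (by simp; positivity) (measure_ball_pos volume _ one_pos).ne'
  have hct : c ≠ ⊤ := ENNReal.mul_ne_top ENNReal.ofReal_ne_top measure_ball_lt_top.ne
  refine ⟨c⁻¹ ^ (1 / p), ENNReal.rpow_ne_top_of_nonneg (by positivity) (ENNReal.inv_ne_top.mpr hc),
    fun z w hzw => ?_⟩
  have hpow : (fun u => ENNReal.ofReal (‖f u‖ ^ p)) = fun u => ‖f u‖ₑ ^ p := by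
    ext u; rw [← ENNReal.ofReal_rpow_of_nonneg (norm_nonneg _) hp0.le, ofReal_norm]
  have key : c * ‖f w‖ₑ ^ p ≤ heatT n β (fun u => ENNReal.ofReal (‖f u‖ ^ p)) z := by
    rw [mul_assoc, hpow]
    exact (mul_le_mul_right (volume_ball_mul_enorm_rpow_le_setLIntegral hf hp w one_pos) _).trans
      (ofReal_mul_setLIntegral_ball_le_heatT hβ.le _ hzw)
  calc ‖f w‖ₑ = (‖f w‖ₑ ^ p) ^ (1 / p) := by
        rw [← ENNReal.rpow_mul, mul_one_div_cancel hp0.ne', ENNReal.rpow_one]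
    _ ≤ (c⁻¹ * heatT n β (fun u => ENNReal.ofReal (‖f u‖ ^ p)) z) ^ (1 / p) := by
        gcongr
        rw [← ENNReal.div_eq_inv_mul, ENNReal.le_div_iff_mul_le (Or.inl hc) (Or.inl hct), mul_comm]
        exact key
    _ = _ := ENNReal.mul_rpow_of_nonneg _ _ (by positivity)

theorem exists_norm_add_mul_norm_le {β γ p q M : ℝ} (hβ : 0 < β) (hγ : 0 < γ)
    (hp : 1 ≤ p) (hq : 1 ≤ q) {f g : En n → ℂ} (hf : Differentiable ℂ f)
    (hg : Differentiable ℂ g)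
    (hM : ∀ z, heatT n β (fun u => ENNReal.ofReal (‖f u‖ ^ p)) z ^ (1 / p) *
      heatT n γ (fun u => ENNReal.ofReal (‖g u‖ ^ q)) z ^ (1 / q) ≤ ENNReal.ofReal M)
    (v : En n) :
    ∃ K : ℝ, ∀ z, ‖f (z + v)‖ * ‖g z‖ ≤ K := by
  obtain ⟨Cf, hCf, hf'⟩ := exists_enorm_le_mul_heatT_rpow hβ hp hf ‖v‖
  obtain ⟨Cg, hCg, hg'⟩ := exists_enorm_le_mul_heatT_rpow hγ hq hg 0
  refine ⟨(Cf * Cg * ENNReal.ofReal M).toReal, fun z => ?_⟩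
  have h : ‖f (z + v)‖ₑ * ‖g z‖ₑ ≤ Cf * Cg * ENNReal.ofReal M := by
    refine (mul_le_mul' (hf' z (z + v) (by simp)) (hg' z z (by simp))).trans ?_
    rw [mul_mul_mul_comm]
    exact mul_le_mul_right (hM z) _
  rw [← toReal_enorm, ← toReal_enorm, ← ENNReal.toReal_mul]
  exact ENNReal.toReal_mono (by finiteness) h

end Heat

theorem fock_toeplitz_product_general (n : ℕ) (p q α : ℝ) (hp : 1 < p)
    (hq : q = p / (p - 1)) (hα : 0 < α) (f g : En n → ℂ)
    (hf : Differentiable ℂ f) (hg : Differentiable ℂ g)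
    (hsup : ∃ M : ℝ, ∀ z : En n,
      (heatT n (α * p / 2) (fun u => ENNReal.ofReal (‖f u‖ ^ p)) z) ^ (1 / p) *
        (heatT n (α * q / 2) (fun u => ENNReal.ofReal (‖g u‖ ^ q)) z) ^ (1 / q)
        ≤ ENNReal.ofReal M) :
    (∃ c : ℂ, ∀ z : En n, f z * g z = c) ∧
      ((∀ z, f z ≠ 0) → (∀ z, g z ≠ 0) →
        ∃ (a c : ℂ) (b : Fin n → ℂ), ∀ z : En n,
          f z = Complex.exp (a + ∑ j, b j * z j) ∧
            g z = c * Complex.exp (-(a + ∑ j, b j * z j))) := by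
  obtain ⟨M, hM⟩ := hsup
  have hq1 : 1 < q := by
    rw [hq, lt_div_iff₀ (by linarith)]
    linarith
  have hfg := exists_norm_add_mul_norm_le (by positivity) (by positivity) hp.le hq1.le hf hg hM
  have hconst : ∃ c, ∀ z, f z * g z = c := by
    obtain ⟨K, hK⟩ := hfg 0
    refine (hf.mul hg).exists_const_forall_eq_of_bounded (isBounded_iff_forall_norm_le.mpr
      ⟨K, Set.forall_mem_range.mpr fun z => ?_⟩)
    simpa [norm_mul] using hK z
  refine ⟨hconst, fun hf0 hg0 => ?_⟩
  obtain ⟨c, hc⟩ := hconst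
  have hc0 : c ≠ 0 := hc 0 ▸ mul_ne_zero (hf0 0) (hg0 0)
  obtain ⟨a, L, hL⟩ := exists_eq_exp_add_of_norm_add_le hf hf0 fun v =>
    (hfg v).imp' (· / ‖c‖) fun _ hK => norm_add_le_mul_norm_of_mul_eq_const hc hc0 hK
  refine ⟨a, c, fun j => L (EuclideanSpace.single j 1), fun z => ?_⟩
  rw [← EuclideanSpace.continuousLinearMap_apply_eq_sum, ← hL, Complex.exp_neg, ← hL, ← hc z]
  exact ⟨rfl, by field_simp [hf0 z]⟩

/-- for entire `f ∈ F_α^p`, `g ∈ F_α^q` with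
`sup_z ((|f|^p)~^{(αp/2)}(z))^{1/p} ((|g|^q)~^{(αq/2)}(z))^{1/q} < ∞`,
the product `f·g` is constant; if `f` and `g` never vanish then
`f = e^{a + Σ b_j z_j}` and `g = c e^{-(a + Σ b_j z_j)}`. -/
theorem fock_toeplitz_product (n : ℕ) (hn : 1 ≤ n) (p q α : ℝ) (hp : 1 < p)
    (hq : q = p / (p - 1)) (hα : 0 < α) (f g : En n → ℂ)
    (hf : Differentiable ℂ f) (hg : Differentiable ℂ g)
    (hfp : (∫⁻ z : En n, ENNReal.ofReal
        (‖f z‖ ^ p * Real.exp (-(p * α / 2) * ‖z‖ ^ 2))) < ⊤)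
    (hgq : (∫⁻ z : En n, ENNReal.ofReal
        (‖g z‖ ^ q * Real.exp (-(q * α / 2) * ‖z‖ ^ 2))) < ⊤)
    (hsup : ∃ M : ℝ, ∀ z : En n,
      (heatT n (α * p / 2) (fun u => ENNReal.ofReal (‖f u‖ ^ p)) z) ^ (1 / p) *
        (heatT n (α * q / 2) (fun u => ENNReal.ofReal (‖g u‖ ^ q)) z) ^ (1 / q)
        ≤ ENNReal.ofReal M) :
    (∃ c : ℂ, ∀ z : En n, f z * g z = c) ∧
      ((∀ z, f z ≠ 0) → (∀ z, g z ≠ 0) →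
        ∃ (a c : ℂ) (b : Fin n → ℂ), ∀ z : En n,
          f z = Complex.exp (a + ∑ j, b j * z j) ∧
            g z = c * Complex.exp (-(a + ∑ j, b j * z j))) :=
  fock_toeplitz_product_general n p q α hp hq hα f g hf hg hsup

end
end
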